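/- arXiv:2212.07991 — 7 statements merged into one kernel-verified Lean document; each statement's English description precedes it below -/
import Mathlib

section
/- Let k ≥ 1, n ≥ 1, and let Z_1, …, Z_k ⊆ {1, …, n} satisfy |∩_{i∈Ω} Z_i| = k − |Ω| for every nonempty subset Ω ⊆ {1, …, k}. Then there exist pairwise distinct indices j_1, …, j_k ∈ {1, …, n} such that for all r, i ∈ {1, …, k}: j_r ∈ Z_i if and only if i ≠ r. (Consequently, any matrix over a field whose zero entries in row i occur exactly at the positions in Z_i contains a k×k submatrix that is a generalized permutation matrix.) -/
/-- If `Z_1, …, Z_k ⊆ {1,…,n}` satisfy `|∩_{i∈Ω} Z_i| + |Ω| = k` for every nonempty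
`Ω ⊆ {1,…,k}`, then there are pairwise distinct column indices `j_1, …, j_k` such that
`j_r ∈ Z_i ↔ i ≠ r`; i.e. any matrix fulfilling the support constraints contains a
`k×k` generalized permutation submatrix. -/
theorem exists_generalized_permutation_columns
    (k n : ℕ) (hk : 1 ≤ k) (hn : 1 ≤ n)
    (Z : Fin k → Finset (Fin n))
    (hZ : ∀ Ω : Finset (Fin k), Ω.Nonempty → (Ω.inf Z).card + Ω.card = k) :
    ∃ j : Fin k → Fin n, Function.Injective j ∧
      ∀ r i : Fin k, j r ∈ Z i ↔ i ≠ r := by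
  haveI : NeZero k := ⟨by omega⟩
  haveI : Nonempty (Fin n) := ⟨⟨0, hn⟩⟩
  have huniv : (Finset.univ.inf Z : Finset (Fin n)) = ∅ := by
    have h := hZ Finset.univ ⟨0, Finset.mem_univ _⟩
    rw [Finset.card_univ, Fintype.card_fin] at h
    exact Finset.card_eq_zero.mp (by omega)
  -- key: for each r, there is x in the inf over {r}ᶜ, and it's not in Z r
  have key : ∀ r : Fin k, ∃ x : Fin n,
      x ∈ (({r}ᶜ : Finset (Fin k)).inf Z) ∧ x ∉ Z r := by
    intro r
    have hne : (({r}ᶜ : Finset (Fin k)).inf Z).Nonempty := by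
      by_cases hΩ : ({r}ᶜ : Finset (Fin k)).Nonempty
      · have h := hZ _ hΩ
        have hcc : ({r}ᶜ : Finset (Fin k)).card = k - 1 := by
          simp [Finset.card_compl]
        exact Finset.card_pos.mp (by omega)
      · rw [Finset.not_nonempty_iff_eq_empty] at hΩ
        rw [hΩ, Finset.inf_empty]
        exact Finset.univ_nonempty
    obtain ⟨x, hx⟩ := hne
    refine ⟨x, hx, fun hxr => ?_⟩
    have : x ∈ Finset.univ.inf Z := by
      rw [Finset.mem_inf]
      intro i _
      by_cases hi : i = r
      · exact hi ▸ hxr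
      · exact Finset.mem_inf.mp hx i (by simpa using hi)
    rw [huniv] at this
    exact absurd this (Finset.notMem_empty x)
  choose j hj1 hj2 using key
  have hmem : ∀ r i : Fin k, i ≠ r → j r ∈ Z i := fun r i hir =>
    Finset.mem_inf.mp (hj1 r) i (by simpa using hir)
  refine ⟨j, ?_, fun r i => ⟨fun h => ?_, hmem r i⟩⟩
  · intro r s hrs
    by_contra hne
    exact hj2 s (hrs ▸ hmem r s (Ne.symm hne))
  · rintro rfl
    exact hj2 _ h
end

section
/- Let 1 ≤ k ≤ n and let Z_1, …, Z_k ⊆ {1, …, n} be such that |∩_{i∈Ω} Z_i| + |Ω| = k for every nonempty Ω ⊆ {1, …, k}. Then for every prime power q ≥ n there exist pairwise distinct elements α_1, …, α_n ∈ F_q, nonzero elements v_1, …, v_n ∈ F_q, and a matrix G ∈ F_q^{k×n} of rank k with G_{ij} = 0 for all i ∈ {1, …, k} and j ∈ Z_i, whose row space equals the generalized Reed–Solomon code {(v_1 f(α_1), …, v_n f(α_n)) : f ∈ F_q[x], deg f < k}. -/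
/-- Proposition 1: if `|∩_{i∈Ω} Z_i| + |Ω| = k` for every nonempty `Ω ⊆ {1,…,k}`, then
over any finite field of size `q ≥ n` there is a generalized Reed–Solomon code with a
generator matrix `G` fulfilling the support constraints `G_{ij} = 0` for `j ∈ Z_i`. -/
theorem exists_GRS_with_support_constrained_generator
    (n k : ℕ) (hk : 1 ≤ k) (hkn : k ≤ n)
    (Fq : Type*) [Field Fq] [Fintype Fq] (hq : n ≤ Fintype.card Fq)
    (Z : Fin k → Finset (Fin n))
    (hZ : ∀ Ω : Finset (Fin k), Ω.Nonempty → (Ω.inf Z).card + Ω.card = k) :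
    ∃ (α : Fin n → Fq) (v : Fin n → Fq) (G : Matrix (Fin k) (Fin n) Fq),
      Function.Injective α ∧
      (∀ j, v j ≠ 0) ∧
      G.rank = k ∧
      (∀ (i : Fin k) (j : Fin n), j ∈ Z i → G i j = 0) ∧
      (Submodule.span Fq (Set.range fun i : Fin k => G i) : Set (Fin n → Fq)) =
        {c : Fin n → Fq | ∃ f : Polynomial Fq, f.degree < (k : ℕ) ∧
          c = fun j => v j * f.eval (α j)} := by
  classical
  -- choose injective code locators
  obtain ⟨e⟩ : Nonempty (Fin n ↪ Fq) :=
    Function.Embedding.nonempty_of_card_le (by simpa using hq)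
  set α : Fin n → Fq := ⇑e with hα
  have hαinj : Function.Injective α := e.injective
  -- basic consequences of hZ
  have hcard : ∀ i, (Z i).card + 1 = k := by
    intro i
    have := hZ {i} ⟨i, Finset.mem_singleton_self i⟩
    simpa using this
  have hfull : (Finset.univ : Finset (Fin k)).inf Z = ∅ := by
    have : Nonempty (Fin k) := ⟨⟨0, hk⟩⟩
    have hne : (Finset.univ : Finset (Fin k)).Nonempty := Finset.univ_nonempty
    have := hZ Finset.univ hne
    rw [Finset.card_univ, Fintype.card_fin] at this
    exact Finset.card_eq_zero.mp (by omega)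
  -- for each i, a point outside Z i that lies in every other Z i'
  have ht : ∀ i : Fin k, ∃ r : Fin n, r ∉ Z i ∧ ∀ i', i' ≠ i → r ∈ Z i' := by
    intro i
    by_cases h1 : k = 1
    · refine ⟨⟨0, by omega⟩, ?_, ?_⟩
      · have : (Z i).card = 0 := by have := hcard i; omega
        simp [Finset.card_eq_zero.mp this]
      · intro i' hi'
        exact absurd (Fin.ext (by omega : (i' : ℕ) = (i : ℕ))) hi'
    · set Ω : Finset (Fin k) := Finset.univ.erase i with hΩdef
      have hΩcard : Ω.card = k - 1 := by
        rw [hΩdef, Finset.card_erase_of_mem (Finset.mem_univ i), Finset.card_univ,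
          Fintype.card_fin]
      have hΩne : Ω.Nonempty := Finset.card_pos.mp (by omega)
      have hone : (Ω.inf Z).card = 1 := by
        have := hZ Ω hΩne
        omega
      obtain ⟨r, hr⟩ := Finset.card_eq_one.mp hone
      have hrmem : ∀ i', i' ≠ i → r ∈ Z i' := by
        intro i' hi'
        have h1 : Ω.inf Z ≤ Z i' := Finset.inf_le (by simp [hΩdef, hi'])
        exact h1 (by simp [hr])
      refine ⟨r, ?_, hrmem⟩
      intro hri
      have : r ∈ (Finset.univ : Finset (Fin k)).inf Z := by
        have : ({r} : Finset (Fin n)) ≤ (Finset.univ : Finset (Fin k)).inf Z := by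
          apply Finset.le_inf
          intro i' _
          rcases eq_or_ne i' i with rfl | hne
          · simpa using hri
          · simpa using hrmem i' hne
        exact this (Finset.mem_singleton_self r)
      rw [hfull] at this
      exact absurd this (Finset.notMem_empty r)
  choose t htZ htZ' using ht
  -- the polynomials
  set f : Fin k → Polynomial Fq := fun i => ∏ j ∈ Z i, (Polynomial.X - Polynomial.C (α j))
    with hf
  have hdeg : ∀ i, (f i).degree = ((Z i).card : ℕ) := by
    intro i
    rw [hf]
    rw [Polynomial.degree_prod]
    simp [Polynomial.degree_X_sub_C]
  have hdeglt : ∀ i, (f i).degree < (k : ℕ) := by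
    intro i
    rw [hdeg i]
    exact_mod_cast (by have := hcard i; omega : (Z i).card < k)
  have heval0 : ∀ i j, j ∈ Z i → (f i).eval (α j) = 0 := by
    intro i j hj
    rw [hf]
    simp only [Polynomial.eval_prod]
    exact Finset.prod_eq_zero hj (by simp)
  have hevalne : ∀ i j, j ∉ Z i → (f i).eval (α j) ≠ 0 := by
    intro i j hj
    rw [hf]
    simp only [Polynomial.eval_prod]
    apply Finset.prod_ne_zero_iff.mpr
    intro j' hj'
    simp only [Polynomial.eval_sub, Polynomial.eval_X, Polynomial.eval_C, sub_ne_zero]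
    intro heq
    exact hj (hαinj heq ▸ hj')
  -- the generator matrix
  set G : Matrix (Fin k) (Fin n) Fq := Matrix.of fun i j => (f i).eval (α j) with hG
  -- key: independence of evaluations
  have hkey : ∀ g : Fin k → Fq, (∀ j, ∑ i, g i * (f i).eval (α j) = 0) → ∀ i, g i = 0 := by
    intro g hg i
    have := hg (t i)
    rw [Finset.sum_eq_single i] at this
    · rcases mul_eq_zero.mp this with h | h
      · exact h
      · exact absurd h (hevalne i (t i) (htZ i))
    · intro i' _ hi'
      rw [heval0 i' (t i) (htZ' i i' hi'), mul_zero]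
    · intro h
      exact absurd (Finset.mem_univ i) h
  -- linear independence of the rows of G
  have hrows : LinearIndependent Fq (fun i : Fin k => G i) := by
    rw [Fintype.linearIndependent_iff]
    intro g hg i
    apply hkey g _ i
    intro j
    have := congrFun hg j
    simpa [Finset.sum_apply, hG] using this
  -- linear independence of the polynomials f
  have hfind : LinearIndependent Fq f := by
    rw [Fintype.linearIndependent_iff]
    intro g hg i
    apply hkey g _ i
    intro j
    have := congrArg (Polynomial.eval (α j)) hg
    simpa [Polynomial.eval_finset_sum, Polynomial.smul_eq_C_mul] using this
  -- the span of f is the whole space of polynomials of degree < k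
  have hfmem : ∀ i, f i ∈ Polynomial.degreeLT Fq k := fun i =>
    Polynomial.mem_degreeLT.mpr (hdeglt i)
  have hle : Submodule.span Fq (Set.range f) ≤ Polynomial.degreeLT Fq k := by
    rw [Submodule.span_le]
    rintro - ⟨i, rfl⟩
    exact hfmem i
  have hfd : FiniteDimensional Fq (Polynomial.degreeLT Fq k) :=
    Module.Finite.equiv (Polynomial.degreeLTEquiv Fq k).symm
  have hfinrank : Module.finrank Fq (Polynomial.degreeLT Fq k) = k := by
    rw [(Polynomial.degreeLTEquiv Fq k).finrank_eq]
    simp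
  have hspan : Submodule.span Fq (Set.range f) = Polynomial.degreeLT Fq k := by
    apply Submodule.eq_of_le_of_finrank_le hle
    rw [hfinrank, finrank_span_eq_card hfind, Fintype.card_fin]
  -- the evaluation map
  set φ : Polynomial Fq →ₗ[Fq] (Fin n → Fq) :=
    LinearMap.pi (fun j => Polynomial.leval (α j)) with hφ
  have hφf : ∀ p : Polynomial Fq, φ p = fun j => p.eval (α j) := fun p => rfl
  have hmap : Submodule.span Fq (Set.range fun i : Fin k => G i) =
      Submodule.map φ (Polynomial.degreeLT Fq k) := by
    rw [← hspan, Submodule.map_span, ← Set.range_comp]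
    rfl
  refine ⟨α, fun _ => 1, G, hαinj, fun _ => one_ne_zero, ?_, ?_, ?_⟩
  · rw [hrows.rank_matrix, Fintype.card_fin]
  · intro i j hj
    exact heval0 i j hj
  · rw [hmap]
    ext c
    simp only [Submodule.map_coe, Set.mem_image, SetLike.mem_coe, Set.mem_setOf_eq,
      Polynomial.mem_degreeLT, one_mul]
    constructor
    · rintro ⟨p, hp, rfl⟩
      exact ⟨p, hp, (hφf p).symm ▸ rfl⟩
    · rintro ⟨p, hp, rfl⟩
      exact ⟨p, hp, (hφf p)⟩
end

section
/- Let 1 ≤ k ≤ n and let Z_1, …, Z_k ⊆ {1, …, n} be such that |∩_{i∈Ω} Z_i| + |Ω| = k for every nonempty Ω ⊆ {1, …, k}. Then for every prime power q and every integer m ≥ n there exist elements β_1, …, β_n ∈ F_{q^m} that are linearly independent over F_q, and a matrix G ∈ F_{q^m}^{k×n} of rank k with G_{ij} = 0 for all i ∈ {1, …, k} and j ∈ Z_i, whose row space equals the Gabidulin code {(Σ_{r=0}^{k−1} f_r β_1^{q^r}, …, Σ_{r=0}^{k−1} f_r β_n^{q^r}) : f_0, …, f_{k−1} ∈ F_{q^m}}.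 -/
/-!
Let `M` be the `k × n` Moore matrix of `β`, whose rows span the Gabidulin code. Any `k` of its
columns are independent: `v M` vanishing at `k` of the `β_j` means that the `q`-linearized
polynomial with coefficients `v`, of degree `< q^k`, vanishes on their `q^k`-element `F_q`-span.
So for each `i` some `w_i ≠ 0` has `w_i M` vanishing on `Z_i`, since `|Z_i| = k - 1`, and
`G = W M` works once the matrix `W` with rows `w_i` is invertible. If `∑_{i ∈ Ω} v_i w_i = 0`
with all `v_i ≠ 0` and `i ∈ Ω`, then `w_i M` vanishes on `Z_i ∪ ⋂_{l ∈ Ω \ {i}} Z_l`, which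
has `(k - 1) + (k - |Ω| + 1) - (k - |Ω|) = k` elements by inclusion–exclusion (all `n` if
`Ω = {i}`), so `w_i = 0`.
-/

open Finset Matrix Polynomial

noncomputable def linearizedPolynomial {R : Type*} [Semiring R] (q : ℕ) {s : ℕ}
    (f : Fin s → R) : R[X] :=
  ∑ r, C (f r) * X ^ q ^ (r : ℕ)

section linearizedPolynomial

variable {R : Type*} [Semiring R] {q s : ℕ} (f : Fin s → R)

lemma eval_linearizedPolynomial (x : R) :
    (linearizedPolynomial q f).eval x = ∑ r, f r * x ^ q ^ (r : ℕ) := by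
  simp [linearizedPolynomial, eval_finsetSum]

lemma coeff_linearizedPolynomial_pow (hq : 1 < q) (r : Fin s) :
    (linearizedPolynomial q f).coeff (q ^ (r : ℕ)) = f r := by
  have hinj : Function.Injective fun r : Fin s => q ^ (r : ℕ) :=
    (Nat.pow_right_injective hq).comp Fin.val_injective
  rw [linearizedPolynomial, finsetSum_coeff, sum_eq_single r]
  · simp
  · intro r' _ hr'
    rw [coeff_C_mul_X_pow, if_neg (hinj.ne (Ne.symm hr'))]
  · simp

lemma linearizedPolynomial_eq_zero_iff (hq : 1 < q) : linearizedPolynomial q f = 0 ↔ f = 0 := by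
  refine ⟨fun h => funext fun r => ?_, fun h => by simp [h, linearizedPolynomial]⟩
  rw [← coeff_linearizedPolynomial_pow f hq, h, coeff_zero, Pi.zero_apply]

lemma natDegree_linearizedPolynomial_lt (hq : 1 < q) :
    (linearizedPolynomial q f).natDegree < q ^ s := by
  cases s with
  | zero => simp [linearizedPolynomial]
  | succ s =>
    refine (natDegree_sum_le_of_forall_le _ _ fun r _ => ?_).trans_lt (Nat.pow_lt_pow_succ hq)
    exact (natDegree_C_mul_le _ _).trans
      ((natDegree_X_pow_le _).trans (Nat.pow_le_pow_right (by omega) (Nat.lt_succ_iff.mp r.2)))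

end linearizedPolynomial

section Frobenius

variable {Fq K ι : Type*} [Field Fq] [Fintype Fq] [CommRing K] [Algebra Fq K] [Fintype ι]

lemma eval_linearizedPolynomial_linearCombination {s : ℕ} (f : Fin s → K) (γ : ι → K)
    (c : ι → Fq) :
    (linearizedPolynomial (Fintype.card Fq) f).eval (Fintype.linearCombination Fq γ c) =
      Fintype.linearCombination Fq
        (fun j => (linearizedPolynomial (Fintype.card Fq) f).eval (γ j)) c := by
  have hfrob (r : ℕ) (x : K) :
      x ^ Fintype.card Fq ^ r = (FiniteField.frobeniusAlgHom Fq K ^ r) x := by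
    rw [AlgHom.coe_pow, FiniteField.coe_frobeniusAlgHom, pow_iterate]
  simp only [eval_linearizedPolynomial, Fintype.linearCombination_apply, hfrob, map_sum, map_smul,
    mul_sum, mul_smul_comm, smul_sum]
  exact sum_comm

end Frobenius

section Moore

variable {Fq K ι : Type*} [Field Fq] [Fintype Fq] [Field K] [Algebra Fq K]

theorem eq_zero_of_forall_eval_linearizedPolynomial_eq_zero [Fintype ι] {γ : ι → K}
    (hγ : LinearIndependent Fq γ) {s : ℕ} (hs : s ≤ Fintype.card ι) {f : Fin s → K}
    (hf : ∀ j, (linearizedPolynomial (Fintype.card Fq) f).eval (γ j) = 0) : f = 0 := by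
  classical
  have hq : 1 < Fintype.card Fq := Fintype.one_lt_card
  rw [← linearizedPolynomial_eq_zero_iff f hq]
  refine eq_zero_of_natDegree_lt_card_of_eval_eq_zero _ hγ.fintypeLinearCombination_injective
    (fun c => ?_) ?_
  · rw [eval_linearizedPolynomial_linearCombination]
    simp [hf, Fintype.linearCombination_apply]
  · calc _ < Fintype.card Fq ^ s := natDegree_linearizedPolynomial_lt f hq
      _ ≤ Fintype.card Fq ^ Fintype.card ι := Nat.pow_le_pow_right (by omega) hs
      _ = Fintype.card (ι → Fq) := by simp

def mooreMatrix (q s : ℕ) (β : ι → K) : Matrix (Fin s) ι K :=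
  of fun r j => β j ^ q ^ (r : ℕ)

lemma vecMul_mooreMatrix_apply {q s : ℕ} (β : ι → K) (v : Fin s → K) (j : ι) :
    (v ᵥ* mooreMatrix q s β) j = (linearizedPolynomial q v).eval (β j) := by
  simp [vecMul, dotProduct, mooreMatrix, eval_linearizedPolynomial]

lemma coe_span_range_row_mooreMatrix [Fintype ι] (q s : ℕ) (β : ι → K) :
    (Submodule.span K (Set.range (mooreMatrix q s β).row) : Set (ι → K)) =
      {c | ∃ f : Fin s → K, c = fun j => ∑ r, f r * β j ^ q ^ (r : ℕ)} := by
  ext c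
  simp [← range_vecMulLinear, funext_iff, vecMul_mooreMatrix_apply, eval_linearizedPolynomial,
    eq_comm]

theorem eq_zero_of_forall_mem_vecMul_mooreMatrix_eq_zero {β : ι → K}
    (hβ : LinearIndependent Fq β) {s : ℕ} {U : Finset ι} (hU : s ≤ #U) {v : Fin s → K}
    (hv : ∀ j ∈ U, (v ᵥ* mooreMatrix (Fintype.card Fq) s β) j = 0) : v = 0 :=
  eq_zero_of_forall_eval_linearizedPolynomial_eq_zero (γ := fun j : U => β j)
    (hβ.comp _ Subtype.val_injective)
    (by simpa using hU) fun j => by simpa [vecMul_mooreMatrix_apply] using hv j j.2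

theorem linearIndependent_row_mooreMatrix [Fintype ι] {β : ι → K}
    (hβ : LinearIndependent Fq β) {s : ℕ} (hs : s ≤ Fintype.card ι) :
    LinearIndependent K (mooreMatrix (Fintype.card Fq) s β).row := by
  rw [← vecMul_injective_iff, ← coe_vecMulLinear, ← LinearMap.ker_eq_bot,
    LinearMap.ker_eq_bot']
  exact fun v hv => eq_zero_of_forall_mem_vecMul_mooreMatrix_eq_zero hβ (U := univ) hs
    fun j _ => congr_fun hv j

end Moore

section SupportConstraints

variable {K V ι κ : Type*} [Field K] [AddCommGroup V] [Module K V]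

lemma exists_ne_zero_forall_mem_eq_zero [FiniteDimensional K V] (φ : V →ₗ[K] κ → K)
    (S : Finset κ) (hS : #S < Module.finrank K V) : ∃ v ≠ 0, ∀ j ∈ S, φ v j = 0 := by
  let restrict : V →ₗ[K] S → K := LinearMap.funLeft K K (Subtype.val : S → κ) ∘ₗ φ
  obtain ⟨v, hv, hv0⟩ := Submodule.exists_mem_ne_zero_of_ne_bot
    (LinearMap.ker_ne_bot_of_finrank_lt (f := restrict) (by simpa using hS))
  exact ⟨v, hv0, fun j hj => congr_fun hv ⟨j, hj⟩⟩

theorem linearIndependent_of_forall_mem_eq_zero [Fintype κ] [DecidableEq ι] [DecidableEq κ]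
    {d : ℕ} (φ : V →ₗ[K] κ → K)
    (hφ : ∀ U : Finset κ, d ≤ #U → ∀ v, (∀ j ∈ U, φ v j = 0) → v = 0)
    (Z : ι → Finset κ) (hZ : ∀ Ω : Finset ι, ∀ i ∈ Ω, d ≤ #(Z i ∪ (Ω.erase i).inf Z))
    (w : ι → V) (hw0 : ∀ i, w i ≠ 0) (hwZ : ∀ i, ∀ j ∈ Z i, φ (w i) j = 0) :
    LinearIndependent K w := by
  classical
  rw [linearIndependent_iff']
  intro s g hg i hi
  by_contra hgi
  set Ω := s.filter (g · ≠ 0)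
  refine hw0 i (hφ _ (hZ Ω i (mem_filter.2 ⟨hi, hgi⟩)) (w i) fun j hj => ?_)
  rcases mem_union.1 hj with hj | hj
  · exact hwZ i j hj
  have hgφ : ∑ l ∈ s, g l * φ (w l) j = 0 := by
    simpa [map_sum] using congr_fun (congr_arg φ hg) j
  rw [sum_eq_single i _ (absurd hi)] at hgφ
  · exact (mul_eq_zero.1 hgφ).resolve_left hgi
  intro l hl hli
  by_cases hgl : g l = 0
  · rw [hgl, zero_mul]
  have hlΩ : l ∈ Ω.erase i := mem_erase.2 ⟨hli, mem_filter.2 ⟨hl, hgl⟩⟩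
  rw [hwZ l j (Finset.inf_le (f := Z) hlΩ hj), mul_zero]

lemma le_card_union_inf_erase [Fintype κ] [DecidableEq ι] [DecidableEq κ] {k : ℕ}
    (hk : k ≤ Fintype.card κ) {Z : ι → Finset κ}
    (hZ : ∀ Ω : Finset ι, Ω.Nonempty → #(Ω.inf Z) + #Ω = k) {Ω : Finset ι} {i : ι}
    (hi : i ∈ Ω) :
    k ≤ #(Z i ∪ (Ω.erase i).inf Z) := by
  rcases (Ω.erase i).eq_empty_or_nonempty with hΩ' | hΩ'
  · simpa [hΩ', union_eq_right.2 (subset_univ (Z i))] using hk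
  have hinf : Ω.inf Z = Z i ∩ (Ω.erase i).inf Z := by
    conv_lhs => rw [← insert_erase hi]
    rw [inf_insert, inf_eq_inter]
  have hZi := hZ {i} (singleton_nonempty i)
  rw [inf_singleton, card_singleton] at hZi
  have hZΩ := hZ Ω ⟨i, hi⟩
  rw [hinf] at hZΩ
  have := hZ _ hΩ'
  have := card_erase_add_one hi
  have := card_union_add_card_inter (Z i) ((Ω.erase i).inf Z)
  omega

end SupportConstraints

lemma span_range_row_mul_of_isUnit {R m n : Type*} [CommRing R] [Fintype m] [DecidableEq m]
    {A : Matrix m m R} (hA : IsUnit A) (B : Matrix m n R) :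
    Submodule.span R (Set.range (A * B).row) = Submodule.span R (Set.range B.row) := by
  rw [← range_vecMulLinear, ← range_vecMulLinear]
  apply SetLike.coe_injective
  have hvecMul : (A * B).vecMul = B.vecMul ∘ A.vecMul :=
    funext fun v => (vecMul_vecMul v A B).symm
  simp only [LinearMap.coe_range, coe_vecMulLinear, hvecMul,
    (vecMul_surjective_iff_isUnit.2 hA).range_comp]

theorem exists_Gabidulin_with_support_constrained_generator_general
    (n k : ℕ) (hkn : k ≤ n)
    (q m : ℕ) (Fq K : Type*) [Field Fq] [Fintype Fq] (hq : Fintype.card Fq = q)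
    [Field K] [Algebra Fq K] (hm : Module.finrank Fq K = m) (hmn : n ≤ m)
    (Z : Fin k → Finset (Fin n))
    (hZ : ∀ Ω : Finset (Fin k), Ω.Nonempty → (Ω.inf Z).card + Ω.card = k) :
    ∃ (β : Fin n → K) (G : Matrix (Fin k) (Fin n) K),
      LinearIndependent Fq β ∧
      G.rank = k ∧
      (∀ (i : Fin k) (j : Fin n), j ∈ Z i → G i j = 0) ∧
      (Submodule.span K (Set.range fun i : Fin k => G i) : Set (Fin n → K)) =
        {c : Fin n → K | ∃ f : Fin k → K,
          c = fun j => ∑ r : Fin k, f r * β j ^ q ^ (r : ℕ)} := by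
  classical
  subst hq hm
  obtain ⟨β, hβ⟩ := exists_linearIndependent_of_le_finrank hmn
  set M := mooreMatrix (Fintype.card Fq) k β
  have hZ_lt (i : Fin k) : #(Z i) < Module.finrank K (Fin k → K) := by
    have := hZ {i} (singleton_nonempty i)
    rw [inf_singleton, card_singleton] at this
    rw [Module.finrank_fin_fun]
    omega
  choose w hw0 hwZ using fun i =>
    exists_ne_zero_forall_mem_eq_zero M.vecMulLinear (Z i) (hZ_lt i)
  have hT : IsUnit (of w) := linearIndependent_rows_iff_isUnit.1 <|
    linearIndependent_of_forall_mem_eq_zero M.vecMulLinear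
      (fun U hU v hv => eq_zero_of_forall_mem_vecMul_mooreMatrix_eq_zero hβ hU hv) Z
      (fun Ω i hi => le_card_union_inf_erase (by simpa using hkn) hZ hi) w hw0 hwZ
  refine ⟨β, of w * M, hβ, ?_, fun i j hj => hwZ i j hj, ?_⟩
  · rw [rank_mul_eq_right_of_isUnit_det _ _ ((isUnit_iff_isUnit_det _).1 hT),
      (linearIndependent_row_mooreMatrix hβ (by simpa using hkn)).rank_matrix, Fintype.card_fin]
  · exact (congr_arg _ (span_range_row_mul_of_isUnit hT M)).trans
      (coe_span_range_row_mooreMatrix _ _ β)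

/-- Proposition 2: if `|∩_{i∈Ω} Z_i| + |Ω| = k` for every nonempty `Ω ⊆ {1,…,k}`, then
for any prime power `q` and `m ≥ n` there is an `[n,k]_{q^m}` Gabidulin code with a
generator matrix `G` fulfilling the support constraints `G_{ij} = 0` for `j ∈ Z_i`. -/
theorem exists_Gabidulin_with_support_constrained_generator
    (n k : ℕ) (hk : 1 ≤ k) (hkn : k ≤ n)
    (q m : ℕ) (Fq K : Type*) [Field Fq] [Fintype Fq] (hq : Fintype.card Fq = q)
    [Field K] [Algebra Fq K] (hm : Module.finrank Fq K = m) (hmn : n ≤ m)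
    (Z : Fin k → Finset (Fin n))
    (hZ : ∀ Ω : Finset (Fin k), Ω.Nonempty → (Ω.inf Z).card + Ω.card = k) :
    ∃ (β : Fin n → K) (G : Matrix (Fin k) (Fin n) K),
      LinearIndependent Fq β ∧
      G.rank = k ∧
      (∀ (i : Fin k) (j : Fin n), j ∈ Z i → G i j = 0) ∧
      (Submodule.span K (Set.range fun i : Fin k => G i) : Set (Fin n → K)) =
        {c : Fin n → K | ∃ f : Fin k → K,
          c = fun j => ∑ r : Fin k, f r * β j ^ q ^ (r : ℕ)} :=
  exists_Gabidulin_with_support_constrained_generator_general n k hkn q m Fq K hq hm hmn Z hZ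
end

section
/- Let q be a prime power, m ≥ 1, 1 ≤ k ≤ n, and let (n_1, …, n_ℓ) be an ordered partition of n. Let C ⊆ (F_{q^m})^n be a linear code of dimension k whose minimum sum-rank distance with respect to (n_1, …, n_ℓ) equals n − k + 1 (i.e., C is MSRD). If G ∈ F_{q^m}^{k×n} is a generator matrix of C (G has rank k and its row space is C) satisfying G_{ij} = 0 for all i ∈ {1, …, k} and j ∈ Z_i, then the sets Z_1, …, Z_k ⊆ {1, …, n} satisfy |∩_{i∈Ω} Z_i| + |Ω| ≤ k for every nonempty Ω ⊆ {1, …, k}. -/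
/-- The `F_q`-rank of a vector over `F_{q^m}`. -/
noncomputable def rankFq (Fq : Type*) {K : Type*} [Field Fq] [Field K] [Algebra Fq K]
    {ι : Type*} (y : ι → K) : ℕ :=
  Module.finrank Fq (Submodule.span Fq (Set.range y))

/-- The sum-rank weight with respect to the ordered partition `(n_1, …, n_ℓ)`. -/
noncomputable def sumRankWt (Fq : Type*) {K : Type*} [Field Fq] [Field K] [Algebra Fq K]
    {ℓ : ℕ} {nn : Fin ℓ → ℕ} (x : ((l : Fin ℓ) × Fin (nn l)) → K) : ℕ :=
  ∑ l : Fin ℓ, rankFq Fq (fun t : Fin (nn l) => x ⟨l, t⟩)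

/-!
Sum-rank weight is bounded by Hamming weight, since the `F_q`-span of a block has at most as
many generators as the block has nonzero entries. The rows of `G` indexed by `Ω` span a
`|Ω|`-dimensional subcode vanishing on `W = ∩_{i∈Ω} Z_i`; forcing `|Ω| - 1` further zeros
outside `W` leaves a nonzero codeword of Hamming weight at most `n - |W| - |Ω| + 1`. The MSRD
property makes this at least `n - k + 1`, whence `|W| + |Ω| ≤ k`.
-/

open Module Finset

section HammingBounds

variable {ι : Type*} [Fintype ι]

lemma hammingNorm_le_card_compl [DecidableEq ι] {β : ι → Type*} [∀ i, Zero (β i)]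
    [∀ i, DecidableEq (β i)] {x : ∀ i, β i} {S : Finset ι} (hS : ∀ i ∈ S, x i = 0) :
    hammingNorm x ≤ #Sᶜ :=
  card_le_card fun i hi => mem_compl.2 fun hiS => (mem_filter.1 hi).2 (hS i hiS)

lemma rankFq_le_hammingNorm (Fq : Type*) {K : Type*} [Field Fq] [Field K] [Algebra Fq K]
    [DecidableEq K] (y : ι → K) : rankFq Fq y ≤ hammingNorm y := by
  let y' : {t // y t ≠ 0} → K := fun t => y t
  have hspan : Submodule.span Fq (Set.range y) ≤ Submodule.span Fq (Set.range y') := by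
    refine Submodule.span_le.2 ?_
    rintro _ ⟨t, rfl⟩
    by_cases ht : y t = 0
    · simp [ht]
    · exact Submodule.subset_span ⟨⟨t, ht⟩, rfl⟩
  have : Module.Finite Fq (Submodule.span Fq (Set.range y')) :=
    Module.Finite.span_of_finite Fq (Set.finite_range y')
  calc rankFq Fq y ≤ (Set.range y').finrank Fq := Submodule.finrank_mono hspan
    _ ≤ Fintype.card {t // y t ≠ 0} := finrank_range_le_card y'
    _ = hammingNorm y := Fintype.card_subtype _

end HammingBounds

lemma sumRankWt_le_hammingNorm (Fq : Type*) {K : Type*} [Field Fq] [Field K] [Algebra Fq K]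
    [DecidableEq K] {ℓ : ℕ} {nn : Fin ℓ → ℕ} (x : ((l : Fin ℓ) × Fin (nn l)) → K) :
    sumRankWt Fq x ≤ hammingNorm x :=
  calc sumRankWt Fq x ≤ ∑ l, hammingNorm fun t : Fin (nn l) => x ⟨l, t⟩ :=
        sum_le_sum fun l _ => rankFq_le_hammingNorm Fq _
    _ = hammingNorm x := by
        simp only [hammingNorm, ← card_sigma]
        congr 1
        ext ⟨l, t⟩
        simp

lemma Matrix.linearIndependent_row_of_rank_eq_card {m n R : Type*} [Field R] [Fintype m]
    [Fintype n] {A : Matrix m n R} (hA : A.rank = Fintype.card m) : LinearIndependent R A.row := by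
  rw [linearIndependent_iff_card_eq_finrank_span, Set.finrank, ← A.rank_eq_finrank_span_row, hA]

namespace Submodule

variable {K ι : Type*} [Field K] [Fintype ι]

lemma exists_ne_zero_forall_eq_zero_of_card_lt_finrank (V : Submodule K (ι → K))
    (T : Finset ι) (hT : #T < finrank K V) : ∃ v ∈ V, v ≠ 0 ∧ ∀ j ∈ T, v j = 0 := by
  let restrict : V →ₗ[K] (T → K) := (LinearMap.funLeft K K ((↑) : T → ι)).comp V.subtype
  have hker : LinearMap.ker restrict ≠ ⊥ :=
    LinearMap.ker_ne_bot_of_finrank_lt (by simpa using hT)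
  obtain ⟨⟨v, hvV⟩, hv, hv0⟩ := (Submodule.ne_bot_iff _).1 hker
  refine ⟨v, hvV, fun h => hv0 (by simp [h]), fun j hj => ?_⟩
  exact congrFun (LinearMap.mem_ker.1 hv) ⟨j, hj⟩

/-- The Singleton bound, punctured at the coordinates `W` on which `V` vanishes. -/
lemma exists_ne_zero_hammingNorm_add_finrank_le [DecidableEq ι] [DecidableEq K]
    (V : Submodule K (ι → K)) (W : Finset ι) (hW : ∀ v ∈ V, ∀ j ∈ W, v j = 0)
    (hV : 0 < finrank K V) :
    ∃ v ∈ V, v ≠ 0 ∧ hammingNorm v + finrank K V + #W ≤ Fintype.card ι + 1 := by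
  have hdim : finrank K V ≤ #Wᶜ := by
    by_contra! h
    obtain ⟨v, hvV, hv0, hv⟩ := V.exists_ne_zero_forall_eq_zero_of_card_lt_finrank Wᶜ h
    refine hv0 (funext fun j => ?_)
    by_cases hj : j ∈ W
    · exact hW v hvV j hj
    · exact hv j (mem_compl.2 hj)
  obtain ⟨T, hTW, hT⟩ := exists_subset_card_eq (s := Wᶜ) (n := finrank K V - 1) (by omega)
  obtain ⟨v, hvV, hv0, hvT⟩ :=
    V.exists_ne_zero_forall_eq_zero_of_card_lt_finrank T (by omega)
  have hdisj : Disjoint W T := disjoint_left.2 fun j hjW hjT => mem_compl.1 (hTW hjT) hjW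
  have hweight : hammingNorm v ≤ #(W ∪ T)ᶜ := hammingNorm_le_card_compl fun j hj =>
    (mem_union.1 hj).elim (hW v hvV j) (hvT j)
  rw [card_compl, card_union_of_disjoint hdisj] at hweight
  have : #W + #T ≤ Fintype.card ι := card_union_of_disjoint hdisj ▸ card_le_univ _
  exact ⟨v, hvV, hv0, by omega⟩

end Submodule

theorem support_constraints_of_MSRD_generator_general
    (Fq K : Type*) [Field Fq] [Field K] [Algebra Fq K]
    (ℓ : ℕ) (nn : Fin ℓ → ℕ) (k : ℕ)
    (C : Submodule K (((l : Fin ℓ) × Fin (nn l)) → K))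
    (hd1 : ∀ c ∈ C, c ≠ 0 → (∑ l, nn l) - k + 1 ≤ sumRankWt Fq c)
    (G : Matrix (Fin k) ((l : Fin ℓ) × Fin (nn l)) K)
    (hG : G.rank = k)
    (hrow : Submodule.span K (Set.range fun i : Fin k => G i) = C)
    (Z : Fin k → Finset ((l : Fin ℓ) × Fin (nn l)))
    (hsupp : ∀ (i : Fin k) (j : (l : Fin ℓ) × Fin (nn l)), j ∈ Z i → G i j = 0) :
    ∀ Ω : Finset (Fin k), Ω.Nonempty → (Ω.inf Z).card + Ω.card ≤ k := by
  classical
  intro Ω hΩ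
  let V := Submodule.span K (Set.range fun i : Ω => G i)
  have hrows : LinearIndependent K G :=
    Matrix.linearIndependent_row_of_rank_eq_card (by rw [hG, Fintype.card_fin])
  have hVdim : finrank K V = #Ω :=
    (finrank_span_eq_card (hrows.comp _ Subtype.val_injective)).trans (Fintype.card_coe Ω)
  have hVC : V ≤ C := hrow ▸ Submodule.span_mono (Set.range_comp_subset_range _ G)
  have hVW : ∀ v ∈ V, ∀ j ∈ Ω.inf Z, v j = 0 := fun v hv =>
    Submodule.mem_pi.1 <| (Submodule.span_le (p := Submodule.pi _ fun _ => ⊥)).2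
      (by rintro _ ⟨i, rfl⟩ j hj; exact hsupp i j ((Finset.inf_le i.2 : Ω.inf Z ⊆ Z i) hj)) hv
  obtain ⟨c, hcV, hc0, hc⟩ :=
    V.exists_ne_zero_hammingNorm_add_finrank_le (Ω.inf Z) hVW (hVdim ▸ hΩ.card_pos)
  have hwt := (hd1 c (hVC hcV) hc0).trans (sumRankWt_le_hammingNorm Fq c)
  simp only [Fintype.card_sigma, Fintype.card_fin, hVdim] at hc
  omega

/-- Necessity of the GM–MDS condition for MSRD codes: if an MSRD code (minimum
sum-rank distance exactly `n − k + 1`) has a generator matrix `G` with `G_{ij} = 0`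
for all `j ∈ Z_i`, then `|∩_{i∈Ω} Z_i| + |Ω| ≤ k` for every nonempty `Ω`. -/
theorem support_constraints_of_MSRD_generator
    (q m : ℕ) (Fq K : Type*) [Field Fq] [Fintype Fq] (hq : Fintype.card Fq = q)
    [Field K] [Algebra Fq K] (hm : Module.finrank Fq K = m) (hm1 : 1 ≤ m)
    (ℓ : ℕ) (hℓ : 1 ≤ ℓ) (nn : Fin ℓ → ℕ) (hnn : ∀ l, 1 ≤ nn l)
    (k : ℕ) (hk : 1 ≤ k) (hkn : k ≤ ∑ l, nn l)
    (C : Submodule K (((l : Fin ℓ) × Fin (nn l)) → K))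
    (hdim : Module.finrank K C = k)
    (hd1 : ∀ c ∈ C, c ≠ 0 → (∑ l, nn l) - k + 1 ≤ sumRankWt Fq c)
    (hd2 : ∃ c ∈ C, c ≠ 0 ∧ sumRankWt Fq c = (∑ l, nn l) - k + 1)
    (G : Matrix (Fin k) ((l : Fin ℓ) × Fin (nn l)) K)
    (hG : G.rank = k)
    (hrow : Submodule.span K (Set.range fun i : Fin k => G i) = C)
    (Z : Fin k → Finset ((l : Fin ℓ) × Fin (nn l)))
    (hsupp : ∀ (i : Fin k) (j : (l : Fin ℓ) × Fin (nn l)), j ∈ Z i → G i j = 0) :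
    ∀ Ω : Finset (Fin k), Ω.Nonempty → (Ω.inf Z).card + Ω.card ≤ k :=
  support_constraints_of_MSRD_generator_general Fq K ℓ nn k C hd1 G hG hrow Z hsupp
end

section
/- Let q be a prime power, m ≥ 1, and n ≥ 1. In the multivariate polynomial ring F_{q^m}[X_1, …, X_n], the determinant of the n×n Moore matrix whose (i, j) entry is X_j^{q^{i−1}} (for i, j ∈ {1, …, n}) is a nonzero polynomial; in fact, the coefficient of the monomial X_1^{q^0} X_2^{q^1} ⋯ X_n^{q^{n−1}} in this determinant equals 1. -/
open MvPolynomial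

lemma prod_X_pow_eq_monomial' {K : Type*} [CommSemiring K] {n : ℕ} (e : Fin n → ℕ) :
    ∏ i, (X i : MvPolynomial (Fin n) K) ^ e i
      = monomial (Finsupp.equivFunOnFinite.symm e) 1 := by
  rw [← prod_X_pow_eq_monomial]
  refine (Finset.prod_subset (Finset.subset_univ _) ?_).symm.trans
    (Finset.prod_congr rfl ?_) <;> intro x hx
  · intro hx2
    have : e x = 0 := by
      simpa [Finsupp.mem_support_iff] using hx2
    simp [this]
  · simp

/-- The determinant of the `n×n` Moore matrix in the variables `X_1, …, X_n` (entry
`(i,j)` being `X_j^{q^{i-1}}`) over `F_{q^m}` is a nonzero multivariate polynomial;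
indeed the coefficient of the monomial `X_1^{q^0} X_2^{q^1} ⋯ X_n^{q^{n-1}}` is `1`. -/
theorem moore_det_ne_zero
    (q m : ℕ) (Fq K : Type*) [Field Fq] [Fintype Fq] (hq : Fintype.card Fq = q)
    [Field K] [Algebra Fq K] (hm : Module.finrank Fq K = m) (hm1 : 1 ≤ m)
    (n : ℕ) (hn : 1 ≤ n) :
    (Matrix.of fun i j : Fin n =>
        (MvPolynomial.X j : MvPolynomial (Fin n) K) ^ q ^ (i : ℕ)).det ≠ 0 ∧
    MvPolynomial.coeff (Finsupp.equivFunOnFinite.symm fun j : Fin n => q ^ (j : ℕ))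
      (Matrix.of fun i j : Fin n =>
        (MvPolynomial.X j : MvPolynomial (Fin n) K) ^ q ^ (i : ℕ)).det = 1 := by
  have hq2 : 2 ≤ q := hq ▸ Fintype.one_lt_card
  have hcoeff : MvPolynomial.coeff
      (Finsupp.equivFunOnFinite.symm fun j : Fin n => q ^ (j : ℕ))
      (Matrix.of fun i j : Fin n =>
        (MvPolynomial.X j : MvPolynomial (Fin n) K) ^ q ^ (i : ℕ)).det = 1 := by
    rw [Matrix.det_apply]
    have : ∀ σ : Equiv.Perm (Fin n),
        ∏ i, (Matrix.of fun i j : Fin n =>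
          (X j : MvPolynomial (Fin n) K) ^ q ^ (i : ℕ)) (σ i) i
        = monomial (Finsupp.equivFunOnFinite.symm fun j => q ^ ((σ j : Fin n) : ℕ)) 1 := by
      intro σ
      rw [← prod_X_pow_eq_monomial']
      rfl
    rw [MvPolynomial.coeff_sum]
    simp only [this, MvPolynomial.coeff_smul, MvPolynomial.coeff_monomial]
    have heq : ∀ σ : Equiv.Perm (Fin n),
        (Finsupp.equivFunOnFinite.symm fun j => q ^ ((σ j : Fin n) : ℕ))
          = Finsupp.equivFunOnFinite.symm (fun j : Fin n => q ^ (j : ℕ)) ↔ σ = 1 := by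
      intro σ
      constructor
      · intro h
        ext j
        have := congrFun (Finsupp.equivFunOnFinite.symm.injective h) j
        exact Nat.pow_right_injective hq2 this
      · rintro rfl; rfl
    rw [Finset.sum_eq_single (1 : Equiv.Perm (Fin n))]
    · simp
    · intro σ _ hσ
      rw [if_neg (fun h => hσ ((heq σ).1 h))]
      simp
    · simp
  refine ⟨fun h0 => ?_, hcoeff⟩
  rw [h0] at hcoeff
  simp at hcoeff
end

section
/- Let q be a prime power and m ≥ 1. For α ∈ F_{q^m} and i ≥ 0, set N_i(α) := α^{(q^i−1)/(q−1)} (the i-th truncated norm, with N_0(α) = 1). Let α_1, …, α_s ∈ F_{q^m} be such that the s×s matrix with (i, j) entry N_{i−1}(α_j) is invertible (i.e., the set Ω = {α_1, …, α_s} is P-independent). Let Z be a proper subset of Ω with |Z| = d, and suppose f_0, …, f_d ∈ F_{q^m} with f_d = 1 satisfy Σ_{i=0}^{d} f_i N_i(ζ) = 0 for all ζ ∈ Z (i.e., the monic skew polynomial of degree d with these coefficients vanishes on Z under remainder evaluation). Then for every α ∈ Ω ∖ Z one has Σ_{i=0}^{d} f_i N_i(α) ≠ 0. -/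
/-!
Suppose the monic skew polynomial `p` of degree `|Z|` also vanished at `αⱼ`. In `K[X; σ]` the
product `(X - γ) * p` evaluates at `b` to `b * σ (p(b)) - γ * p(b)`, so it keeps every root of `p`,
and `γ = b * σ (p(b)) / p(b)` adds the root `b`. Adjoining the remaining `s - |Z| - 1` points this
way gives a monic skew polynomial of degree `s - 1` vanishing on all of `Ω`: its coefficient vector
lies in the left kernel of the σ-Vandermonde matrix, contradicting P-independence. For the
`q`-Frobenius the truncated norm `∏ σᵏ(a)` is `a ^ ((qⁱ - 1) / (q - 1))`.
-/

open Polynomial Finset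

section TruncatedNorm

variable {R : Type*} [CommRing R] (σ : R →+* R)

def truncNorm (i : ℕ) (a : R) : R :=
  ∏ k ∈ range i, σ^[k] a

theorem truncNorm_succ (i : ℕ) (a : R) : truncNorm σ (i + 1) a = a * σ (truncNorm σ i a) := by
  simp only [truncNorm, prod_range_succ', map_prod, Function.iterate_succ_apply',
    Function.iterate_zero_apply, mul_comm]

theorem truncNorm_eq_pow_geomSum {q : ℕ} (hσ : ∀ x, σ x = x ^ q) (i : ℕ) (a : R) :
    truncNorm σ i a = a ^ ∑ k ∈ range i, q ^ k := by
  induction i with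
  | zero => simp [truncNorm]
  | succ i ih => rw [truncNorm_succ, ih, hσ, ← pow_mul, ← pow_succ', geom_sum_succ, mul_comm]

theorem truncNorm_frobeniusAlgHom (F : Type*) [Field F] [Fintype F] [Algebra F R] (i : ℕ)
    (a : R) :
    truncNorm (FiniteField.frobeniusAlgHom F R : R →+* R) i a
      = a ^ ((Fintype.card F ^ i - 1) / (Fintype.card F - 1)) := by
  rw [truncNorm_eq_pow_geomSum _ (fun _ => rfl), Nat.geomSum_eq Fintype.one_lt_card]

end TruncatedNorm

section RemainderEvaluation

variable {R : Type*} [CommRing R] (σ : R →+* R)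

/-- A skew polynomial `∑ cᵢ Xⁱ ∈ R[X; σ]` is stored as the ordinary polynomial with the same
coefficients (so the skew product `X * p` is `X * p.map σ`); this is its remainder evaluation. -/
def skewEval (a : R) : R[X] →ₗ[R] R :=
  lsum fun i => LinearMap.mulRight R (truncNorm σ i a)

theorem skewEval_monomial (a c : R) (i : ℕ) :
    skewEval σ a (monomial i c) = c * truncNorm σ i a := by
  simp [skewEval, sum_monomial_index]

theorem skewEval_X_mul_map (a : R) (p : R[X]) :
    skewEval σ a (X * p.map σ) = a * σ (skewEval σ a p) := by
  induction p using Polynomial.induction_on' with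
  | add p q hp hq => simp only [Polynomial.map_add, mul_add, map_add, hp, hq]
  | monomial i c =>
    rw [map_monomial, X_mul_monomial, skewEval_monomial, skewEval_monomial, truncNorm_succ,
      map_mul]
    ring

theorem skewEval_eq_sum_range {p : R[X]} {n : ℕ} (hp : p.natDegree < n) (a : R) :
    skewEval σ a p = ∑ i ∈ range n, p.coeff i * truncNorm σ i a := by
  simp only [skewEval, lsum_apply, LinearMap.mulRight_apply]
  exact sum_over_range' p (f := fun i c => c * truncNorm σ i a) (fun _ => zero_mul _) n hp

theorem exists_monic_skewEval_eq_sum [Nontrivial R] {d : ℕ} {f : ℕ → R} (hf : f d = 1) :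
    ∃ p : R[X], p.Monic ∧ p.natDegree = d ∧
      ∀ a, skewEval σ a p = ∑ i ∈ range (d + 1), f i * truncNorm σ i a := by
  have hlower : (∑ i : Fin d, C (f i) * X ^ (i : ℕ)).degree < (X ^ d : R[X]).degree := by
    rw [degree_X_pow]
    exact degree_sum_fin_lt _
  refine ⟨X ^ d + ∑ i : Fin d, C (f i) * X ^ (i : ℕ), monic_X_pow_add (degree_sum_fin_lt _),
    by rw [natDegree_add_eq_left_of_degree_lt hlower, natDegree_X_pow], fun a => ?_⟩
  simp only [map_add, map_sum, C_mul_X_pow_eq_monomial]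
  rw [X_pow_eq_monomial, skewEval_monomial, sum_range_succ, hf, add_comm,
    Fin.sum_univ_eq_sum_range (fun i => skewEval σ a (monomial i (f i)))]
  simp only [skewEval_monomial]

end RemainderEvaluation

section PIndependence

variable {K : Type*} [Field K] (σ : K →+* K)

theorem exists_monic_skewEval_eq_zero_insert {p : K[X]} (hp : p.Monic) (b : K) :
    ∃ p' : K[X], p'.Monic ∧ p'.natDegree = p.natDegree + 1 ∧
      (∀ a, skewEval σ a p = 0 → skewEval σ a p' = 0) ∧ skewEval σ b p' = 0 := by
  set v := skewEval σ b p
  set γ := b * σ v / v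
  have hXp : (X * p.map σ).Monic ∧ (X * p.map σ).natDegree = p.natDegree + 1 := by
    refine ⟨monic_X.mul (hp.map σ), ?_⟩
    rw [monic_X.natDegree_mul (hp.map σ), natDegree_X, natDegree_map, add_comm]
  have hγp : (C γ * p).natDegree < (X * p.map σ).natDegree := by
    rw [hXp.2]
    exact Nat.lt_succ_of_le (natDegree_C_mul_le γ p)
  have heval : ∀ a, skewEval σ a (X * p.map σ - C γ * p)
      = a * σ (skewEval σ a p) - γ * skewEval σ a p := by
    intro a
    rw [map_sub, skewEval_X_mul_map, ← smul_eq_C_mul, map_smul, smul_eq_mul]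
  refine ⟨X * p.map σ - C γ * p, hXp.1.sub_of_left (degree_lt_degree hγp),
    (natDegree_sub_eq_left_of_natDegree_lt hγp).trans hXp.2, fun a ha => by simp [heval, ha],
    ?_⟩
  rw [heval]
  rcases eq_or_ne v 0 with hv | hv
  · simp [v, hv]
  · rw [div_mul_cancel₀ _ hv, sub_self]

theorem exists_monic_skewEval_eq_zero_union {ι : Type*} [DecidableEq ι] {p : K[X]}
    (hp : p.Monic) (α : ι → K) (U : Finset ι) :
    ∃ p' : K[X], p'.Monic ∧ p'.natDegree = p.natDegree + U.card ∧
      (∀ a, skewEval σ a p = 0 → skewEval σ a p' = 0) ∧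
      ∀ i ∈ U, skewEval σ (α i) p' = 0 := by
  induction U using Finset.induction_on with
  | empty => exact ⟨p, hp, rfl, fun _ h => h, by simp⟩
  | insert i U hi ih =>
    obtain ⟨p₁, hp₁, hdeg₁, hroots₁, hU₁⟩ := ih
    obtain ⟨p₂, hp₂, hdeg₂, hroots₂, hi₂⟩ :=
      exists_monic_skewEval_eq_zero_insert σ hp₁ (α i)
    refine ⟨p₂, hp₂, by rw [hdeg₂, hdeg₁, card_insert_of_notMem hi, add_assoc],
      fun a ha => hroots₂ a (hroots₁ a ha), ?_⟩
    rintro j hj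
    rcases mem_insert.mp hj with rfl | hj
    · exact hi₂
    · exact hroots₂ _ (hU₁ j hj)

def sigmaVandermonde {s : ℕ} (α : Fin s → K) : Matrix (Fin s) (Fin s) K :=
  Matrix.of fun i j => truncNorm σ i (α j)

@[simp]
theorem sigmaVandermonde_apply {s : ℕ} (α : Fin s → K) (i j : Fin s) :
    sigmaVandermonde σ α i j = truncNorm σ i (α j) := rfl

theorem eq_zero_of_forall_skewEval_eq_zero {s : ℕ} {α : Fin s → K}
    (hV : IsUnit (sigmaVandermonde σ α).det) {p : K[X]} (hp : p.natDegree < s)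
    (hroots : ∀ j, skewEval σ (α j) p = 0) : p = 0 := by
  have hcoeff : Matrix.vecMul (fun i : Fin s => p.coeff i) (sigmaVandermonde σ α) = 0 := by
    ext j
    rw [Matrix.vecMul, dotProduct]
    simp only [sigmaVandermonde_apply]
    rw [Fin.sum_univ_eq_sum_range (fun i => p.coeff i * truncNorm σ i (α j)),
      ← skewEval_eq_sum_range σ hp, hroots, Pi.zero_apply]
  have := Matrix.eq_zero_of_vecMul_eq_zero hV.ne_zero hcoeff
  ext i
  rcases lt_or_ge i s with hi | hi
  · exact congrFun this ⟨i, hi⟩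
  · exact coeff_eq_zero_of_natDegree_lt (hp.trans_le hi)

theorem Polynomial.Monic.skewEval_ne_zero_of_notMem {s : ℕ} {α : Fin s → K}
    (hV : IsUnit (sigmaVandermonde σ α).det) {Z : Finset (Fin s)} {p : K[X]} (hp : p.Monic)
    (hdeg : p.natDegree = Z.card) (hZ : ∀ j ∈ Z, skewEval σ (α j) p = 0) {j : Fin s}
    (hj : j ∉ Z) :
    skewEval σ (α j) p ≠ 0 := by
  intro hpj
  obtain ⟨p', hp', hdeg', hroots', hcompl⟩ :=
    exists_monic_skewEval_eq_zero_union σ hp α (insert j Z)ᶜ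
  have hdeg_lt : p'.natDegree < s := by
    have := card_compl_add_card (insert j Z)
    rw [card_insert_of_notMem hj, Fintype.card_fin] at this
    omega
  refine hp'.ne_zero (eq_zero_of_forall_skewEval_eq_zero σ hV hdeg_lt fun i => ?_)
  by_cases hi : i ∈ insert j Z
  · exact hroots' _ (by rcases mem_insert.mp hi with rfl | hi; exacts [hpj, hZ i hi])
  · exact hcompl i (mem_compl.mpr hi)

end PIndependence

theorem minimal_poly_not_vanish_outside_general
    (q s d : ℕ) (Fq K : Type*) [Field Fq] [Fintype Fq] (hq : Fintype.card Fq = q)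
    [Field K] [Algebra Fq K]
    (α : Fin s → K)
    (hV : IsUnit (Matrix.of fun i j : Fin s =>
      α j ^ ((q ^ (i : ℕ) - 1) / (q - 1))).det)
    (Z : Finset (Fin s)) (hZcard : Z.card = d)
    (f : ℕ → K) (hmonic : f d = 1)
    (hvanish : ∀ j ∈ Z,
      ∑ i ∈ Finset.range (d + 1), f i * α j ^ ((q ^ i - 1) / (q - 1)) = 0) :
    ∀ j : Fin s, j ∉ Z →
      ∑ i ∈ Finset.range (d + 1), f i * α j ^ ((q ^ i - 1) / (q - 1)) ≠ 0 := by
  subst hq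
  set σ : K →+* K := (FiniteField.frobeniusAlgHom Fq K : K →+* K)
  have hN : ∀ i a, truncNorm σ i a = a ^ ((Fintype.card Fq ^ i - 1) / (Fintype.card Fq - 1)) :=
    truncNorm_frobeniusAlgHom Fq
  obtain ⟨p, hp, hdeg, hpeval⟩ := exists_monic_skewEval_eq_sum σ hmonic
  intro j hj
  simp only [← hN, ← hpeval] at hvanish ⊢
  refine hp.skewEval_ne_zero_of_notMem σ ?_ (hdeg.trans hZcard.symm) hvanish hj
  simpa only [sigmaVandermonde, hN] using hV

/-- Lemma: let `Ω = {α_1, …, α_s} ⊆ F_{q^m}` be P-independent (its σ-Vandermonde matrix,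
with entries the truncated norms `N_{i−1}(α_j) = α_j^{(q^{i−1}−1)/(q−1)}`, is invertible).
If a monic skew polynomial of degree `d = |Z|` vanishes (under remainder evaluation) on a
proper subset `Z ⊂ Ω`, then it does not vanish at any point of `Ω ∖ Z`. -/
theorem minimal_poly_not_vanish_outside
    (q m s d : ℕ) (Fq K : Type*) [Field Fq] [Fintype Fq] (hq : Fintype.card Fq = q)
    [Field K] [Algebra Fq K] (hm : Module.finrank Fq K = m) (hm1 : 1 ≤ m)
    (α : Fin s → K)
    (hV : IsUnit (Matrix.of fun i j : Fin s =>
      α j ^ ((q ^ (i : ℕ) - 1) / (q - 1))).det)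
    (Z : Finset (Fin s)) (hZne : Z ≠ Finset.univ) (hZcard : Z.card = d)
    (f : ℕ → K) (hmonic : f d = 1)
    (hvanish : ∀ j ∈ Z,
      ∑ i ∈ Finset.range (d + 1), f i * α j ^ ((q ^ i - 1) / (q - 1)) = 0) :
    ∀ j : Fin s, j ∉ Z →
      ∑ i ∈ Finset.range (d + 1), f i * α j ^ ((q ^ i - 1) / (q - 1)) ≠ 0 :=
  minimal_poly_not_vanish_outside_general q s d Fq K hq α hV Z hZcard f hmonic hvanish
end

section
/- Let q be a prime power, m ≥ 1, ℓ ≥ 1, and let n_1, …, n_ℓ ≥ 1 with n = n_1 + ⋯ + n_ℓ. Let a_1, …, a_ℓ ∈ F_{q^m} be nonzero and pairwise non-σ-conjugate (for i ≠ j there is no nonzero c ∈ F_{q^m} with a_i = c^{q−1} a_j), and for each l let β_{l,1}, …, β_{l,n_l} ∈ F_{q^m} be linearly independent over F_q. Then the n×n matrix whose entry in row i ∈ {0, …, n−1} and column φ(l,t) := t + n_1 + ⋯ + n_{l−1} is N_i(a_l β_{l,t}^{q−1}) = (a_l β_{l,t}^{q−1})^{(q^i−1)/(q−1)} is invertible;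 equivalently, the set of linearized Reed–Solomon code locators {a_l β_{l,t}^{q−1} : l ∈ {1,…,ℓ}, t ∈ {1,…,n_l}} is P-independent. -/
/-!
A nonzero vector `g` in the left kernel of the σ-Vandermonde matrix is a nonzero skew polynomial
`F = ∑ gᵢ xⁱ` of degree `< n` vanishing at every locator. With `D_a β = a β^q` one has
`N_i(a β^{q-1}) β = D_aⁱ β`, so `F` vanishes at `a β^{q-1}` iff `β` lies in the kernel of the
`F_q`-linear operator `F(D_a) = ∑ gᵢ D_aⁱ`; hence `F(D_{a_l})` kills the `n_l`-dimensional span of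
the `β_{l,t}`. These dimensions add up to at most `deg F`: right division by `x - a₀ β₀^{q-1}`,
for a nonzero `β₀` in the kernel of `F(D_{a₀})`, gives `F(D_a) = G(D_a) ∘ (D_a - a₀ β₀^{q-1})`
with `deg G = deg F - 1`, and the right factor is injective when `a` is not σ-conjugate to `a₀`
and has kernel `F_q β₀` when `a = a₀`, so the total dimension drops by at most one.
-/

open Finset Module Submodule

-- Coefficientwise right division of a skew polynomial by `x - r`, with `s j = σʲ(r)` and `Xᵢ`
-- standing for `xⁱ` acting on the right.
theorem exists_sum_range_eq_sum_mul_sub_add {R : Type*} [CommRing R] (c s : ℕ → R) (d : ℕ) :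
    ∃ b : ℕ → R, ∃ ρ : R, b d = c (d + 1) ∧ ∀ X : ℕ → R,
      ∑ i ∈ range (d + 2), c i * X i
        = ∑ j ∈ range (d + 1), b j * (X (j + 1) - s j * X j) + ρ * X 0 := by
  induction d generalizing c with
  | zero => exact ⟨fun _ => c 1, c 0 + c 1 * s 0, rfl, fun X => by simp [sum_range_succ]; ring⟩
  | succ d ih =>
    obtain ⟨b, ρ, -, hb⟩ := ih (Function.update c (d + 1) (c (d + 1) + c (d + 2) * s (d + 1)))
    refine ⟨Function.update b (d + 1) (c (d + 2)), ρ, Function.update_self .., fun X => ?_⟩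
    have h := hb X
    have hlow : ∀ {f : ℕ → R} {v : R} (g : ℕ → R → R),
        ∑ i ∈ range (d + 1), g i (Function.update f (d + 1) v i) = ∑ i ∈ range (d + 1), g i (f i) :=
      fun g => sum_congr rfl fun i hi => by
        rw [Function.update_of_ne (by rw [mem_range] at hi; omega)]
    rw [sum_range_succ, hlow (fun i v => v * X i), Function.update_self] at h
    rw [sum_range_succ _ (d + 2), sum_range_succ _ (d + 1), sum_range_succ _ (d + 1),
      hlow (fun j v => v * (X (j + 1) - s j * X j)), Function.update_self]
    linear_combination h

theorem Submodule.finrank_le_finrank_map_add_finrank {R M N : Type*} [DivisionRing R]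
    [AddCommGroup M] [Module R M] [AddCommGroup N] [Module R N] (f : M →ₗ[R] N)
    (p W : Submodule R M) [FiniteDimensional R p] [FiniteDimensional R W]
    (hW : LinearMap.ker f ≤ W) :
    finrank R p ≤ finrank R (p.map f) + finrank R W := by
  have h := (f.domRestrict p).finrank_range_add_finrank_ker
  rw [LinearMap.range_domRestrict, LinearMap.ker_domRestrict, ← finrank_map_subtype_eq,
    map_comap_subtype] at h
  have : finrank R ↥(p ⊓ LinearMap.ker f) ≤ finrank R W :=
    Submodule.finrank_mono (inf_le_right.trans hW)
  omega

theorem mem_range_algebraMap_of_pow_card_eq_self {F L : Type*} [Field F] [Fintype F] [Field L]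
    [Algebra F L] {x : L} (hx : x ^ Fintype.card F = x) : x ∈ Set.range (algebraMap F L) := by
  open Polynomial FiniteField in
  have hroots := roots_map_of_injective_of_card_eq_natDegree (algebraMap F L).injective
    (p := X ^ Fintype.card F - X) (by
      rw [roots_X_pow_card_sub_X, X_pow_card_sub_X_natDegree_eq F Fintype.one_lt_card]; rfl)
  have hmem : x ∈ ((X ^ Fintype.card F - X : F[X]).map (algebraMap F L)).roots := by
    rw [mem_roots (Polynomial.map_ne_zero (X_pow_card_sub_X_ne_zero F Fintype.one_lt_card))]
    simp [hx]
  rw [← hroots, roots_X_pow_card_sub_X] at hmem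
  simpa using hmem

section

variable (Fq : Type*) {K : Type*} [Field Fq] [Fintype Fq] [Field K] [Algebra Fq K]

local notation "q" => Fintype.card Fq

-- `D_a` in the notation of the header.
def twistedFrobenius (a : K) : K →ₗ[Fq] K :=
  LinearMap.mulLeft Fq a ∘ₗ (FiniteField.frobeniusAlgHom Fq K).toLinearMap

-- How the skew polynomial `∑_{i ≤ d} cᵢ xⁱ ∈ K[x; σ]` acts on the σ-conjugacy class of `a`.
def skewOp (c : ℕ → K) (d : ℕ) (a : K) : K →ₗ[Fq] K :=
  ∑ i ∈ range (d + 1), LinearMap.mulLeft Fq (c i) ∘ₗ twistedFrobenius Fq a ^ i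

variable {Fq}

theorem twistedFrobenius_apply (a x : K) : twistedFrobenius Fq a x = a * x ^ q := rfl

theorem skewOp_apply (c : ℕ → K) (d : ℕ) (a x : K) :
    skewOp Fq c d a x = ∑ i ∈ range (d + 1), c i * (twistedFrobenius Fq a ^ i) x := by
  simp [skewOp]

theorem twistedFrobenius_pow_mul (a r x : K) (j : ℕ) :
    (twistedFrobenius Fq a ^ j) (r * x) = r ^ q ^ j * (twistedFrobenius Fq a ^ j) x := by
  induction j with
  | zero => simp
  | succ j ih =>
    rw [pow_succ', Module.End.mul_apply, Module.End.mul_apply, ih, twistedFrobenius_apply,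
      twistedFrobenius_apply, pow_succ, pow_mul]
    ring

theorem twistedFrobenius_pow_apply (a β : K) (i : ℕ) :
    (twistedFrobenius Fq a ^ i) β = (a * β ^ (q - 1)) ^ ((q ^ i - 1) / (q - 1)) * β := by
  rw [← Nat.geomSum_eq Fintype.one_lt_card]
  induction i with
  | zero => simp
  | succ i ih =>
    rw [pow_succ', Module.End.mul_apply, ih, twistedFrobenius_apply, geom_sum_succ, pow_succ,
      mul_pow, ← pow_mul, ← pow_sub_one_mul Fintype.card_ne_zero β]
    ring

theorem exists_skewOp_succ_eq (c : ℕ → K) (d : ℕ) (r : K) :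
    ∃ b : ℕ → K, ∃ ρ : K, b d = c (d + 1) ∧ ∀ a x : K,
      skewOp Fq c (d + 1) a x
        = skewOp Fq b d a ((twistedFrobenius Fq a - LinearMap.mulLeft Fq r) x) + ρ * x := by
  obtain ⟨b, ρ, hb, h⟩ := exists_sum_range_eq_sum_mul_sub_add c (fun j => r ^ q ^ j) d
  refine ⟨b, ρ, hb, fun a x => ?_⟩
  rw [skewOp_apply, skewOp_apply, h]
  congr 1
  refine sum_congr rfl fun j _ => ?_
  rw [LinearMap.sub_apply, map_sub, LinearMap.mulLeft_apply, twistedFrobenius_pow_mul, pow_succ,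
    Module.End.mul_apply]

theorem eq_pow_mul_of_twistedFrobenius_eq {a a₀ β₀ x : K} (hβ₀ : β₀ ≠ 0) (hx : x ≠ 0)
    (h : twistedFrobenius Fq a x = a₀ * β₀ ^ (q - 1) * x) : a₀ = (x * β₀⁻¹) ^ (q - 1) * a := by
  rw [twistedFrobenius_apply, ← pow_sub_one_mul Fintype.card_ne_zero x, ← mul_assoc] at h
  have h' := mul_right_cancel₀ hx h
  rw [mul_pow, inv_pow]
  field_simp
  linear_combination -h'

theorem ker_twistedFrobenius_sub_eq_bot {a a₀ β₀ : K} (hβ₀ : β₀ ≠ 0)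
    (hconj : ∀ c : K, c ≠ 0 → a₀ ≠ c ^ (q - 1) * a) :
    LinearMap.ker (twistedFrobenius Fq a - LinearMap.mulLeft Fq (a₀ * β₀ ^ (q - 1))) = ⊥ := by
  refine LinearMap.ker_eq_bot'.mpr fun x hx => ?_
  by_contra hx0
  rw [LinearMap.sub_apply, sub_eq_zero, LinearMap.mulLeft_apply] at hx
  exact hconj _ (mul_ne_zero hx0 (inv_ne_zero hβ₀)) (eq_pow_mul_of_twistedFrobenius_eq hβ₀ hx0 hx)

theorem ker_twistedFrobenius_sub_le_span {a β₀ : K} (ha : a ≠ 0) (hβ₀ : β₀ ≠ 0) :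
    LinearMap.ker (twistedFrobenius Fq a - LinearMap.mulLeft Fq (a * β₀ ^ (q - 1)))
      ≤ Fq ∙ β₀ := by
  intro x hx
  rw [LinearMap.mem_ker, LinearMap.sub_apply, sub_eq_zero, LinearMap.mulLeft_apply] at hx
  by_cases hx0 : x = 0
  · exact hx0 ▸ zero_mem _
  have hunit : (x * β₀⁻¹) ^ (q - 1) = 1 :=
    (mul_eq_right₀ ha).mp (eq_pow_mul_of_twistedFrobenius_eq hβ₀ hx0 hx).symm
  obtain ⟨c, hc⟩ := mem_range_algebraMap_of_pow_card_eq_self (F := Fq)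
    (by rw [← pow_sub_one_mul Fintype.card_ne_zero, hunit, one_mul] : (x * β₀⁻¹) ^ q = x * β₀⁻¹)
  refine mem_span_singleton.mpr ⟨c, ?_⟩
  rw [Algebra.smul_def, hc, inv_mul_cancel_right₀ hβ₀]

theorem sum_finrank_le_sum_finrank_map_add_one {ι : Type*} [Fintype ι] {a : ι → K}
    (ha : ∀ l, a l ≠ 0) (hconj : ∀ l l', l ≠ l' → ∀ c : K, c ≠ 0 → a l ≠ c ^ (q - 1) * a l')
    {l₀ : ι} {β₀ : K} (hβ₀ : β₀ ≠ 0) (V : ι → Submodule Fq K) [∀ l, FiniteDimensional Fq (V l)] :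
    ∑ l, finrank Fq (V l) ≤ ∑ l, finrank Fq
      ((V l).map (twistedFrobenius Fq (a l) - LinearMap.mulLeft Fq (a l₀ * β₀ ^ (q - 1)))) + 1 := by
  classical
  set T := fun l => twistedFrobenius Fq (a l) - LinearMap.mulLeft Fq (a l₀ * β₀ ^ (q - 1))
  calc ∑ l, finrank Fq (V l)
      ≤ ∑ l, (finrank Fq ((V l).map (T l)) + if l = l₀ then 1 else 0) := by
        refine sum_le_sum fun l _ => ?_
        by_cases hl : l = l₀
        · subst hl
          simpa [finrank_span_singleton hβ₀] using finrank_le_finrank_map_add_finrank _ (V l) _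
            (ker_twistedFrobenius_sub_le_span (ha l) hβ₀)
        · simpa [hl] using finrank_le_finrank_map_add_finrank _ (V l) ⊥
            (ker_twistedFrobenius_sub_eq_bot hβ₀ (hconj l₀ l (Ne.symm hl))).le
    _ = ∑ l, finrank Fq ((V l).map (T l)) + 1 := by simp [sum_add_distrib]

theorem sum_finrank_le_of_le_ker_skewOp {ι : Type*} [Fintype ι] (a : ι → K) (ha : ∀ l, a l ≠ 0)
    (hconj : ∀ l l', l ≠ l' → ∀ c : K, c ≠ 0 → a l ≠ c ^ (q - 1) * a l') (d : ℕ) (c : ℕ → K)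
    (hc : ∃ i ≤ d, c i ≠ 0) (V : ι → Submodule Fq K) [∀ l, FiniteDimensional Fq (V l)]
    (hV : ∀ l, V l ≤ LinearMap.ker (skewOp Fq c d (a l))) :
    ∑ l, finrank Fq (V l) ≤ d := by
  classical
  induction d generalizing c V with
  | zero =>
    obtain ⟨_, hi, hc0⟩ := hc
    obtain rfl := Nat.le_zero.mp hi
    have hbot : ∀ l, V l = ⊥ := fun l => (Submodule.eq_bot_iff _).mpr fun x hx => by
      simpa [skewOp_apply, hc0] using hV l hx
    simp [hbot]
  | succ d ih =>
    by_cases htop : c (d + 1) = 0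
    · refine (ih c ?_ V fun l x hx => ?_).trans d.le_succ
      · obtain ⟨i, hi, hci⟩ := hc
        exact ⟨i, by grind, hci⟩
      · simpa [skewOp_apply, sum_range_succ _ (d + 1), htop] using hV l hx
    by_cases hbot : ∀ l, V l = ⊥
    · rw [sum_eq_zero fun l _ => by rw [hbot l, finrank_bot]]
      exact Nat.zero_le _
    push Not at hbot
    obtain ⟨l₀, hl₀⟩ := hbot
    obtain ⟨β₀, hβ₀V, hβ₀⟩ := exists_mem_ne_zero_of_ne_bot hl₀
    set T := fun l => twistedFrobenius Fq (a l) - LinearMap.mulLeft Fq (a l₀ * β₀ ^ (q - 1))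
    obtain ⟨b, ρ, hb, hdiv⟩ := exists_skewOp_succ_eq (Fq := Fq) c d (a l₀ * β₀ ^ (q - 1))
    have hρ : ρ = 0 := by
      have hTβ₀ : T l₀ β₀ = 0 := by
        simp [T, twistedFrobenius_apply, pow_sub_one_mul Fintype.card_ne_zero]
      have h := hdiv (a l₀) β₀
      rw [hV l₀ hβ₀V, hTβ₀, map_zero, zero_add, eq_comm, mul_eq_zero] at h
      exact h.resolve_right hβ₀
    have hV' : ∀ l, (V l).map (T l) ≤ LinearMap.ker (skewOp Fq b d (a l)) := by
      rintro l _ ⟨x, hx, rfl⟩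
      have h := hdiv (a l) x
      rwa [hV l hx, hρ, zero_mul, add_zero, eq_comm] at h
    calc ∑ l, finrank Fq (V l)
        ≤ ∑ l, finrank Fq ((V l).map (T l)) + 1 :=
          sum_finrank_le_sum_finrank_map_add_one ha hconj hβ₀ V
      _ ≤ d + 1 := by grw [ih b ⟨d, le_rfl, hb ▸ htop⟩ _ hV']

end

theorem LRS_locators_Pindependent_general
    (q ℓ : ℕ) (nn : Fin ℓ → ℕ)
    (Fq K : Type*) [Field Fq] [Fintype Fq] (hq : Fintype.card Fq = q)
    [Field K] [Algebra Fq K]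
    (a : Fin ℓ → K) (ha : ∀ l, a l ≠ 0)
    (hconj : ∀ l l', l ≠ l' → ∀ c : K, c ≠ 0 → a l ≠ c ^ (q - 1) * a l')
    (β : (l : Fin ℓ) → Fin (nn l) → K) (hβ : ∀ l, LinearIndependent Fq (β l)) :
    (Matrix.of fun (i : Fin (∑ l, nn l)) (j : (l : Fin ℓ) × Fin (nn l)) =>
      (a j.1 * β j.1 j.2 ^ (q - 1)) ^ ((q ^ (i : ℕ) - 1) / (q - 1))).rank
      = ∑ l, nn l := by
  subst hq
  set n := ∑ l, nn l
  refine (LinearIndependent.rank_matrix ?_).trans (Fintype.card_fin n)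
  refine Fintype.linearIndependent_iff.mpr fun g hg => ?_
  by_contra! ⟨i₀, hi₀⟩
  let c : ℕ → K := fun i => if h : i < n then g ⟨i, h⟩ else 0
  have hroot : ∀ l, span Fq (Set.range (β l)) ≤ LinearMap.ker (skewOp Fq c (n - 1) (a l)) := by
    refine fun l => span_le.mpr (Set.range_subset_iff.mpr fun t => ?_)
    have h := congrFun hg ⟨l, t⟩
    rw [SetLike.mem_coe, LinearMap.mem_ker, skewOp_apply, Nat.sub_add_cancel i₀.pos, sum_range]
    simpa [c, twistedFrobenius_pow_apply, ← mul_assoc, ← sum_mul] using Or.inl h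
  have _ (l) : FiniteDimensional Fq (span Fq (Set.range (β l))) :=
    .span_of_finite Fq (Set.finite_range _)
  have := sum_finrank_le_of_le_ker_skewOp a ha hconj (n - 1) c ⟨i₀, by omega, by simpa [c]⟩ _ hroot
  simp only [finrank_span_eq_card (hβ _), Fintype.card_fin] at this
  exact (Nat.sub_lt i₀.pos one_pos).not_ge this

/-- P-independence of the linearized Reed–Solomon code locators: if `a_1, …, a_ℓ` are
nonzero and pairwise non-σ-conjugate, and in each block the column multipliers
`β_{l,1}, …, β_{l,n_l}` are `F_q`-linearly independent, then the `n×n` σ-Vandermonde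
matrix of the code locators `a_l β_{l,t}^{q−1}` (row `i ∈ {0,…,n−1}` containing the
truncated norms `N_i(a_l β_{l,t}^{q−1})`) has full rank `n`, i.e. it is invertible. -/
theorem LRS_locators_Pindependent
    (q m ℓ : ℕ) (nn : Fin ℓ → ℕ) (hℓ : 1 ≤ ℓ) (hnn : ∀ l, 1 ≤ nn l)
    (Fq K : Type*) [Field Fq] [Fintype Fq] (hq : Fintype.card Fq = q)
    [Field K] [Algebra Fq K] (hm : Module.finrank Fq K = m)
    (a : Fin ℓ → K) (ha : ∀ l, a l ≠ 0)
    (hconj : ∀ l l', l ≠ l' → ∀ c : K, c ≠ 0 → a l ≠ c ^ (q - 1) * a l')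
    (β : (l : Fin ℓ) → Fin (nn l) → K) (hβ : ∀ l, LinearIndependent Fq (β l)) :
    (Matrix.of fun (i : Fin (∑ l, nn l)) (j : (l : Fin ℓ) × Fin (nn l)) =>
      (a j.1 * β j.1 j.2 ^ (q - 1)) ^ ((q ^ (i : ℕ) - 1) / (q - 1))).rank
      = ∑ l, nn l :=
  LRS_locators_Pindependent_general q ℓ nn Fq K hq a ha hconj β hβ
end
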